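/- arXiv:1805.08013 — 2 statements merged into one kernel-verified Lean document; each statement's English description precedes it below -/
import Mathlib

section
/- In a rooted tree on n vertices, if two vertices x, y are drawn independently uniformly at random and v is their lowest common ancestor, then E[I(v)] >= (2/3) * n, where I(v) is the size of the subtree rooted at v. -/
/-!
The pairs whose LCA is `v` are the pairs in the subtree of `v` that do not lie together in the
subtree of a single child, so there are `I(v)² - ∑_c I(c)²` of them, and
`∑_{x,y} I(lca x y) = ∑_v I(v) (I(v)² - ∑_c I(c)²)`. The subtree sizes of the children of `v`
sum to at most `I(v)`, and `t ↦ 3 I(v) t² - 2 t³` is superadditive on `[0, I(v)]`; this gives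
`3 I(v) ∑_c I(c)² ≤ I(v)³ + 2 ∑_c I(c)³`, i.e. the term of `v` is at least
`(2/3) (I(v)³ - ∑_c I(c)³)`. Summed over all `v` these lower bounds telescope to
`(2/3) I(root)³ = (2/3) n³`.
-/

open Finset
open scoped Classical

/-- A rooted tree on `n` vertices: every vertex has a parent, the root is a fixed
point of the parent map, and every vertex reaches the root by iterating `parent`.
Edges are directed from a non-root vertex to its parent. -/
structure ParentTree (n : ℕ) where
  parent : Fin n → Fin n
  root : Fin n
  root_fixed : parent root = root
  reaches : ∀ v, ∃ k, parent^[k] v = root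

namespace ParentTree

variable {n : ℕ}

/-- `T.Anc v u` : `v` is an ancestor of `u` (possibly `v = u`). -/
def Anc (T : ParentTree n) (v u : Fin n) : Prop := ∃ k, T.parent^[k] u = v

/-- The size of the subtree rooted at `v` (including `v`). -/
noncomputable def subSize (T : ParentTree n) (v : Fin n) : ℕ :=
  (Finset.univ.filter fun u => T.Anc v u).card

/-- The children of `v` (its in-neighbours). -/
noncomputable def children (T : ParentTree n) (v : Fin n) : Finset (Fin n) :=
  Finset.univ.filter fun u => T.parent u = v ∧ u ≠ v

/-- `v` is the lowest common ancestor of `x` and `y`. -/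
def IsLCA (T : ParentTree n) (v x y : Fin n) : Prop :=
  T.Anc v x ∧ T.Anc v y ∧ ∀ w, T.Anc w x → T.Anc w y → T.Anc w v

/-- The quantity `f(T) = ∑_{v ≠ root} I(v)² (I(parent v) - I(v))`. -/
noncomputable def fval (T : ParentTree n) : ℝ :=
  ∑ v ∈ Finset.univ.filter (· ≠ T.root),
    (T.subSize v : ℝ) ^ 2 * ((T.subSize (T.parent v) : ℝ) - (T.subSize v : ℝ))

/-- A rooted tree is a path if every vertex has at most one child. -/
def IsPathTree (T : ParentTree n) : Prop :=
  ∀ v w, v ≠ T.root → w ≠ T.root → T.parent v = T.parent w → v = w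

end ParentTree

theorem sum_three_mul_sq_sub_two_mul_cube_le {ι : Type*} {s : Finset ι} {g : ι → ℝ} {b : ℝ}
    (hg : ∀ i ∈ s, 0 ≤ g i) (hs : ∑ i ∈ s, g i ≤ b) :
    ∑ i ∈ s, (3 * b * g i ^ 2 - 2 * g i ^ 3) ≤
      3 * b * (∑ i ∈ s, g i) ^ 2 - 2 * (∑ i ∈ s, g i) ^ 3 := by
  classical
  induction s using Finset.induction with
  | empty => simp
  | insert a s ha ih =>
    rw [sum_insert ha] at hs ⊢
    rw [sum_insert ha]
    have hga : 0 ≤ g a := hg a (mem_insert_self a s)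
    have hg' : ∀ i ∈ s, 0 ≤ g i := fun i hi => hg i (mem_insert_of_mem hi)
    have hS : 0 ≤ ∑ i ∈ s, g i := sum_nonneg hg'
    have := ih hg' (by linarith)
    -- `t ↦ 3bt² - 2t³` is superadditive on `[0, b]`: the defect is `6xy(b - x - y)`.
    nlinarith [mul_nonneg (mul_nonneg hga hS) (sub_nonneg.2 hs)]

theorem three_mul_mul_sum_sq_le {ι : Type*} {s : Finset ι} {g : ι → ℝ} {b : ℝ}
    (hg : ∀ i ∈ s, 0 ≤ g i) (hs : ∑ i ∈ s, g i ≤ b) :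
    3 * b * ∑ i ∈ s, g i ^ 2 ≤ b ^ 3 + 2 * ∑ i ∈ s, g i ^ 3 := by
  have hsuper := sum_three_mul_sq_sub_two_mul_cube_le hg hs
  have hS : 0 ≤ ∑ i ∈ s, g i := sum_nonneg hg
  have hcube : 3 * b * (∑ i ∈ s, g i) ^ 2 - 2 * (∑ i ∈ s, g i) ^ 3 ≤ b ^ 3 := by
    nlinarith [mul_nonneg (sq_nonneg (b - ∑ i ∈ s, g i)) (by linarith : 0 ≤ b + 2 * ∑ i ∈ s, g i)]
  rw [sum_sub_distrib, ← mul_sum, ← mul_sum] at hsuper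
  linarith

namespace ParentTree

variable {n : ℕ} (T : ParentTree n)

theorem anc_refl (v : Fin n) : T.Anc v v := ⟨0, rfl⟩

theorem anc_trans {a b c : Fin n} (hab : T.Anc a b) (hbc : T.Anc b c) : T.Anc a c := by
  obtain ⟨j, hj⟩ := hab
  obtain ⟨k, hk⟩ := hbc
  exact ⟨j + k, by rw [Function.iterate_add_apply, hk, hj]⟩

theorem anc_parent (u : Fin n) : T.Anc (T.parent u) u := ⟨1, rfl⟩

theorem anc_root (u : Fin n) : T.Anc T.root u := T.reaches u

theorem eq_root_of_isPeriodicPt {v : Fin n} {m : ℕ} (hm : 0 < m)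
    (hv : Function.IsPeriodicPt T.parent m v) : v = T.root := by
  obtain ⟨j, hj⟩ := T.reaches v
  calc v = T.parent^[m * j] v := ((hv.mul_const j).eq).symm
    _ = T.parent^[m * j - j] (T.parent^[j] v) := by
        rw [← Function.iterate_add_apply, Nat.sub_add_cancel (Nat.le_mul_of_pos_left j hm)]
    _ = T.root := by rw [hj, Function.iterate_fixed T.root_fixed]

theorem parent_eq_self_iff (u : Fin n) : T.parent u = u ↔ u = T.root :=
  ⟨T.eq_root_of_isPeriodicPt one_pos, fun h => h ▸ T.root_fixed⟩

theorem anc_antisymm {a b : Fin n} (hab : T.Anc a b) (hba : T.Anc b a) : a = b := by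
  obtain ⟨j, hj⟩ := hab
  obtain ⟨k, hk⟩ := hba
  rcases Nat.eq_zero_or_pos (k + j) with h0 | hpos
  · simpa [show j = 0 by omega] using hj.symm
  · have hb : b = T.root := T.eq_root_of_isPeriodicPt hpos <| by
      rw [Function.IsPeriodicPt, Function.IsFixedPt, Function.iterate_add_apply, hj, hk]
    subst hb
    rw [← hj, Function.iterate_fixed T.root_fixed]

theorem anc_total {v w u : Fin n} (hv : T.Anc v u) (hw : T.Anc w u) :
    T.Anc v w ∨ T.Anc w v := by
  obtain ⟨j, rfl⟩ := hv
  obtain ⟨k, rfl⟩ := hw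
  rcases le_total k j with h | h
  · exact Or.inl ⟨j - k, by rw [← Function.iterate_add_apply, Nat.sub_add_cancel h]⟩
  · exact Or.inr ⟨k - j, by rw [← Function.iterate_add_apply, Nat.sub_add_cancel h]⟩

theorem anc_parent_of_anc_of_ne {a b : Fin n} (hab : T.Anc a b) (hne : a ≠ b) :
    T.Anc a (T.parent b) := by
  obtain ⟨k, rfl⟩ := hab
  cases k with
  | zero => exact absurd rfl hne
  | succ k => exact ⟨k, (Function.iterate_succ_apply _ _ _).symm⟩

theorem mem_children {v c : Fin n} : c ∈ T.children v ↔ T.parent c = v ∧ c ≠ v := by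
  simp [children]

theorem anc_of_mem_children {v c : Fin n} (hc : c ∈ T.children v) : T.Anc v c :=
  (T.mem_children.1 hc).1 ▸ T.anc_parent c

theorem exists_mem_children_anc {v u : Fin n} (hvu : T.Anc v u) (hne : u ≠ v) :
    ∃ c ∈ T.children v, T.Anc c u := by
  obtain ⟨k, hk⟩ := hvu
  induction k with
  | zero => exact absurd hk hne
  | succ k ih =>
    rw [Function.iterate_succ_apply'] at hk
    by_cases hc : T.parent^[k] u = v
    · exact ih hc
    · exact ⟨_, T.mem_children.2 ⟨hk, hc⟩, k, rfl⟩

theorem eq_of_mem_children_of_anc {v c c' : Fin n} (hc : c ∈ T.children v)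
    (hc' : c' ∈ T.children v) (h : T.Anc c c') : c = c' := by
  by_contra hne
  have hcv : T.Anc c v := (T.mem_children.1 hc').1 ▸ T.anc_parent_of_anc_of_ne h hne
  exact (T.mem_children.1 hc).2 (T.anc_antisymm hcv (T.anc_of_mem_children hc))

noncomputable def descendants (v : Fin n) : Finset (Fin n) := univ.filter (T.Anc v)

theorem mem_descendants {v u : Fin n} : u ∈ T.descendants v ↔ T.Anc v u := by
  simp [descendants]

theorem card_descendants (v : Fin n) : #(T.descendants v) = T.subSize v := rfl

theorem subSize_root : T.subSize T.root = n := by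
  rw [← card_descendants, eq_univ_of_forall fun u => T.mem_descendants.2 (T.anc_root u),
    card_univ, Fintype.card_fin]

theorem descendants_subset_of_mem_children {v c : Fin n} (hc : c ∈ T.children v) :
    T.descendants c ⊆ T.descendants v := fun _ hu =>
  T.mem_descendants.2 (T.anc_trans (T.anc_of_mem_children hc) (T.mem_descendants.1 hu))

theorem pairwiseDisjoint_descendants_children (v : Fin n) :
    (T.children v : Set (Fin n)).PairwiseDisjoint T.descendants := by
  intro c hc c' hc' hne
  refine disjoint_left.2 fun u hu hu' => hne ?_
  rcases T.anc_total (T.mem_descendants.1 hu) (T.mem_descendants.1 hu') with h | h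
  · exact T.eq_of_mem_children_of_anc hc hc' h
  · exact (T.eq_of_mem_children_of_anc hc' hc h).symm

theorem sum_subSize_children_le (v : Fin n) :
    ∑ c ∈ T.children v, T.subSize c ≤ T.subSize v := by
  simp only [← card_descendants]
  rw [← card_biUnion (T.pairwiseDisjoint_descendants_children v)]
  exact card_le_card (biUnion_subset.2 fun c hc => T.descendants_subset_of_mem_children hc)

theorem isLCA_iff {v x y : Fin n} : T.IsLCA v x y ↔
    T.Anc v x ∧ T.Anc v y ∧ ∀ c ∈ T.children v, ¬(T.Anc c x ∧ T.Anc c y) := by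
  refine and_congr_right fun hx => and_congr_right fun hy => ⟨?_, ?_⟩
  · rintro hlca c hc ⟨hcx, hcy⟩
    exact (T.mem_children.1 hc).2 (T.anc_antisymm (hlca c hcx hcy) (T.anc_of_mem_children hc))
  · intro hchild w hwx hwy
    by_contra hwv
    have hvw : T.Anc v w := (T.anc_total hwx hx).resolve_left hwv
    obtain ⟨c, hc, hcw⟩ :=
      T.exists_mem_children_anc hvw fun h => hwv (h ▸ T.anc_refl w)
    exact hchild c hc ⟨T.anc_trans hcw hwx, T.anc_trans hcw hwy⟩

noncomputable def lcaPairs (v : Fin n) : Finset (Fin n × Fin n) :=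
  univ.filter fun p => T.IsLCA v p.1 p.2

theorem lcaPairs_eq_sdiff (v : Fin n) :
    T.lcaPairs v = T.descendants v ×ˢ T.descendants v \
      (T.children v).biUnion fun c => T.descendants c ×ˢ T.descendants c := by
  ext ⟨x, y⟩
  simp [lcaPairs, isLCA_iff, mem_descendants, and_assoc]

theorem card_lcaPairs_add_sum_sq (v : Fin n) :
    #(T.lcaPairs v) + ∑ c ∈ T.children v, T.subSize c ^ 2 = T.subSize v ^ 2 := by
  have hdisj : (T.children v : Set (Fin n)).PairwiseDisjoint
      fun c => T.descendants c ×ˢ T.descendants c := fun c hc c' hc' hne =>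
    disjoint_product.2 (Or.inl (T.pairwiseDisjoint_descendants_children v hc hc' hne))
  have hsub : ((T.children v).biUnion fun c => T.descendants c ×ˢ T.descendants c) ⊆
      T.descendants v ×ˢ T.descendants v :=
    biUnion_subset.2 fun c hc => product_subset_product
      (T.descendants_subset_of_mem_children hc) (T.descendants_subset_of_mem_children hc)
  rw [lcaPairs_eq_sdiff, ← card_descendants]
  simpa [card_biUnion hdisj, card_product, sq, card_descendants] using
    card_sdiff_add_card_eq_card hsub

theorem sum_sub_sum_children {M : Type*} [AddCommGroup M] (f : Fin n → M) :
    ∑ v, (f v - ∑ c ∈ T.children v, f c) = f T.root := by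
  have hreindex : ∑ v, ∑ c ∈ T.children v, f c = ∑ c ∈ univ.erase T.root, f c := by
    rw [sum_comm' (t' := univ.erase T.root) (s' := fun c => {T.parent c}) fun v c => ?_]
    · simp only [sum_const, card_singleton, one_smul]
    simp only [mem_univ, true_and, mem_erase, mem_children, mem_singleton, and_true]
    constructor
    · rintro ⟨rfl, hc⟩
      exact ⟨rfl, fun h => hc (h ▸ T.root_fixed.symm)⟩
    · rintro ⟨rfl, hc⟩
      exact ⟨rfl, fun h => hc ((T.parent_eq_self_iff c).1 h.symm)⟩
  rw [sum_sub_distrib, hreindex, ← add_sum_erase _ _ (mem_univ T.root), add_sub_cancel_right]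

theorem sum_sum_sum_isLCA_subSize :
    ∑ x : Fin n, ∑ y : Fin n, ∑ v ∈ univ.filter (fun v => T.IsLCA v x y), (T.subSize v : ℝ) =
      ∑ v, (#(T.lcaPairs v) : ℝ) * T.subSize v := by
  rw [← Fintype.sum_prod_type']
  refine (sum_comm' fun p v => ?_).trans (sum_congr rfl fun v _ => by rw [sum_const, nsmul_eq_mul])
  simp [lcaPairs]

theorem two_mul_sub_sum_cube_le (v : Fin n) :
    2 * ((T.subSize v : ℝ) ^ 3 - ∑ c ∈ T.children v, (T.subSize c : ℝ) ^ 3) ≤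
      3 * ((#(T.lcaPairs v) : ℝ) * T.subSize v) := by
  have hcount : (#(T.lcaPairs v) : ℝ) =
      (T.subSize v : ℝ) ^ 2 - ∑ c ∈ T.children v, (T.subSize c : ℝ) ^ 2 := by
    rw [eq_sub_iff_add_eq]
    exact_mod_cast T.card_lcaPairs_add_sum_sq v
  have hsum : ∑ c ∈ T.children v, (T.subSize c : ℝ) ≤ T.subSize v :=
    mod_cast T.sum_subSize_children_le v
  have := three_mul_mul_sum_sq_le (fun c _ => Nat.cast_nonneg (T.subSize c)) hsum
  rw [hcount]
  linarith

end ParentTree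

theorem expected_lca_subSize_ge_general (n : ℕ) (T : ParentTree n) :
    (2 / 3 : ℝ) * n ≤
      (1 / (n : ℝ) ^ 2) * ∑ x : Fin n, ∑ y : Fin n,
        ∑ v ∈ Finset.univ.filter (fun v => T.IsLCA v x y), (T.subSize v : ℝ) := by
  have hn : (0 : ℝ) < n := Nat.cast_pos.2 T.root.pos
  calc (2 / 3 : ℝ) * n = 1 / (n : ℝ) ^ 2 * (2 / 3 * (T.subSize T.root : ℝ) ^ 3) := by
        rw [T.subSize_root]
        field_simp
    _ = 1 / (n : ℝ) ^ 2 * (2 / 3 *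
          ∑ v, ((T.subSize v : ℝ) ^ 3 - ∑ c ∈ T.children v, (T.subSize c : ℝ) ^ 3)) := by
        rw [T.sum_sub_sum_children]
    _ ≤ 1 / (n : ℝ) ^ 2 * ∑ v, (#(T.lcaPairs v) : ℝ) * T.subSize v := by
        gcongr
        rw [mul_sum]
        exact sum_le_sum fun v _ => by linarith [T.two_mul_sub_sum_cube_le v]
    _ = _ := by rw [T.sum_sum_sum_isLCA_subSize]

/-- If `x, y` are drawn independently and uniformly at random from a rooted tree
on `n` vertices and `v` is their lowest common ancestor, then `E[I(v)] ≥ (2/3)n`.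
(The inner sum over the filter has exactly one term, the subtree size of the LCA
of `x` and `y`.) -/
theorem expected_lca_subSize_ge (n : ℕ) (hn : 0 < n) (T : ParentTree n) :
    (2 / 3 : ℝ) * n ≤
      (1 / (n : ℝ) ^ 2) * ∑ x : Fin n, ∑ y : Fin n,
        ∑ v ∈ Finset.univ.filter (fun v => T.IsLCA v x y), (T.subSize v : ℝ) :=
  expected_lca_subSize_ge_general n T
end

section
/- Let G be a monotone finite DAG with n vertices. Then sum over vertices v of Z(v) / (Z_v + 2 I(v)/n) <= 1, i.e., the analytic Two Path mechanism M^A_{2p} defines a valid (sub)probability distribution. -/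
/-!
Write `W(v) = (I(v)/n)² - ∑_{u → v} (I(u)/n)² / outdeg u` (`Zedge`): this is `Z(v)` with every
`I(v,u)` replaced by the weight of the single edge `u → v`, so `Z(v) ≤ W(v)`. Appending the edge
`u → v` to paths ending at `u` gives `∑_{u → v} I(u) / outdeg u ≤ I(v)`, which together with
monotonicity yields `W(v) ≥ 0`, and `∑_v W(v) = Z` telescopes.

Deleting the out-edges of `v` destroys only paths through `v`, and those into a sink `r` weigh
at most `I(v) I(r,v)` in total; since `∑_r I(r,v) ≤ 1` over the sinks and `I(r) ≤ n`, this gives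
`Z ≤ Z_v + 2 I(v)/n`. Hence the `v`-th term is at most `W(v)/Z`, and these sum to `1`.
-/

open Finset
open scoped Classical

noncomputable section

variable {V : Type*} [Fintype V] [DecidableEq V]

/-- The out-degree of `x` in the digraph with edge relation `E`. -/
def outdeg (E : V → V → Prop) [DecidableRel E] (x : V) : ℕ :=
  (Finset.univ.filter fun y => E x y).card

/-- The weight of a path `l = [v₀, v₁, …, vₘ]`: the product over the edges
`(vᵢ, vᵢ₊₁)` of `1 / outdeg vᵢ`. -/
def pathWeight (E : V → V → Prop) [DecidableRel E] (l : List V) : ℝ :=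
  ((l.zip l.tail).map fun p => 1 / (outdeg E p.1 : ℝ)).prod

/-- `l` is a simple directed path from `y` to `x`. -/
def IsPathList (E : V → V → Prop) (y x : V) (l : List V) : Prop :=
  l ≠ [] ∧ l.Chain' E ∧ l.head? = some y ∧ l.getLast? = some x ∧ l.Nodup

/-- The (finite) set of all simple directed paths from `y` to `x`. -/
def pathFinset (E : V → V → Prop) (y x : V) : Finset (List V) :=
  ((Finset.univ : Finset {l : List V // l.Nodup}).map
      ⟨Subtype.val, Subtype.val_injective⟩).filter (IsPathList E y x)

/-- `infl E x y` : the influence `I(x, y)` of `x` on `y`, i.e. the sum over all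
simple paths from `y` to `x` of the product of `1/outdeg` along the path.
(When `x = y` the only simple path is `[x]`, of weight `1`.) -/
def infl (E : V → V → Prop) [DecidableRel E] (x y : V) : ℝ :=
  ∑ l ∈ pathFinset E y x, pathWeight E l

/-- `totInfl E x = I(x) = ∑_y I(x, y)` : the total influence of `x`. -/
def totInfl (E : V → V → Prop) [DecidableRel E] (x : V) : ℝ :=
  ∑ y, infl E x y

/-- The digraph is acyclic. -/
def Acyclic (E : V → V → Prop) : Prop := ∀ x, ¬ Relation.TransGen E x x

/-- The set of sinks (vertices with no out-edges). -/
def sinks (E : V → V → Prop) [DecidableRel E] : Finset V :=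
  Finset.univ.filter fun r => outdeg E r = 0

end

noncomputable section
variable {V : Type*} [Fintype V] [DecidableEq V]

/-- The digraph is monotone: along every edge, influence strictly increases. -/
def MonotoneDigraph (E : V → V → Prop) [DecidableRel E] : Prop :=
  ∀ x y, E x y → totInfl E x < totInfl E y

/-- The graph obtained from `E` by removing all out-edges of `v`. -/
def remOut (E : V → V → Prop) (v : V) : V → V → Prop := fun a b => E a b ∧ a ≠ v

instance (E : V → V → Prop) [DecidableRel E] (v : V) : DecidableRel (remOut E v) :=
  fun _ _ => instDecidableAnd

/-- `Z = ∑_{r sink} (I(r)/n)²`. -/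
def Zval (E : V → V → Prop) [DecidableRel E] : ℝ :=
  ∑ r ∈ sinks E, (totInfl E r / (Fintype.card V : ℝ)) ^ 2

/-- `Z(v) = (I(v)/n)² − ∑_{u ∈ N(v)} I(v,u) (I(u)/n)²`, where `N(v)` is the set
of in-neighbours of `v`. -/
def Zfun (E : V → V → Prop) [DecidableRel E] (v : V) : ℝ :=
  (totInfl E v / (Fintype.card V : ℝ)) ^ 2 -
    ∑ u ∈ Finset.univ.filter (fun u => E u v),
      infl E v u * (totInfl E u / (Fintype.card V : ℝ)) ^ 2

end

namespace IsPathList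

variable {V : Type*} {E : V → V → Prop} {x y : V} {l : List V}

lemma singleton (x : V) : IsPathList E x x [x] :=
  ⟨List.cons_ne_nil _ _, List.isChain_singleton x, rfl, rfl, List.nodup_singleton x⟩

lemma isChain (h : IsPathList E y x l) : l.IsChain E := h.2.1

lemma exists_eq_cons (h : IsPathList E y x l) : ∃ t, l = y :: t :=
  List.head?_eq_some_iff.1 h.2.2.1

lemma exists_eq_concat (h : IsPathList E y x l) : ∃ s, l = s ++ [x] :=
  List.getLast?_eq_some_iff.1 h.2.2.2.1

lemma eq_singleton (h : IsPathList E x x l) : l = [x] := by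
  obtain ⟨t, rfl⟩ := h.exists_eq_cons
  obtain ⟨-, -, -, hlast, hnd⟩ := h
  cases t with
  | nil => rfl
  | cons a t =>
    rw [List.getLast?_cons_cons, List.getLast?_eq_some_iff] at hlast
    obtain ⟨s, hs⟩ := hlast
    exact absurd (hs ▸ List.mem_append_right s (List.mem_singleton_self x))
      (List.nodup_cons.1 hnd).1

lemma exists_eq_cons_of_ne (h : IsPathList E y x l) (hyx : y ≠ x) :
    ∃ w t, E y w ∧ IsPathList E w x t ∧ l = y :: t := by
  obtain ⟨t, rfl⟩ := h.exists_eq_cons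
  have hc := h.isChain
  obtain ⟨-, -, -, hlast, hnd⟩ := h
  cases t with
  | nil => exact absurd (by simpa using hlast) hyx
  | cons w t =>
    rw [List.isChain_cons_cons] at hc
    rw [List.getLast?_cons_cons] at hlast
    exact ⟨w, w :: t, hc.1,
      ⟨List.cons_ne_nil _ _, hc.2, rfl, hlast, (List.nodup_cons.1 hnd).2⟩, rfl⟩

lemma reflTransGen_head (h : IsPathList E y x l) {a : V} (ha : a ∈ l) :
    Relation.ReflTransGen E y a := by
  obtain ⟨-, hc, hhead, -, -⟩ := h
  refine hc.induction (Relation.ReflTransGen E y) l (fun _ _ e hab => hab.tail e)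
    (fun hne => ?_) a ha
  rw [List.head?_eq_some_head hne, Option.some_inj] at hhead
  rw [hhead]

lemma reflTransGen_last (h : IsPathList E y x l) {a : V} (ha : a ∈ l) :
    Relation.ReflTransGen E a x := by
  obtain ⟨-, hc, -, hlast, -⟩ := h
  refine hc.backwards_induction (Relation.ReflTransGen E · x) l (fun _ _ e hab => hab.head e)
    (fun hne => ?_) a ha
  rw [List.getLast?_eq_some_getLast hne, Option.some_inj] at hlast
  rw [hlast]

lemma cons (hE : Acyclic E) {w : V} (e : E y w) (h : IsPathList E w x l) :
    IsPathList E y x (y :: l) := by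
  have hy : y ∉ l := fun hy => hE y (Relation.TransGen.head' e (h.reflTransGen_head hy))
  obtain ⟨t, rfl⟩ := h.exists_eq_cons
  obtain ⟨-, hc, -, hlast, hnd⟩ := h
  refine ⟨List.cons_ne_nil _ _, List.isChain_cons_cons.2 ⟨e, hc⟩, rfl, ?_,
    List.nodup_cons.2 ⟨hy, hnd⟩⟩
  rwa [List.getLast?_cons_cons]

lemma concat (hE : Acyclic E) {u : V} (e : E u x) (h : IsPathList E y u l) :
    IsPathList E y x (l ++ [x]) := by
  have hx : x ∉ l := fun hx => hE x (Relation.TransGen.tail' (h.reflTransGen_last hx) e)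
  obtain ⟨s, rfl⟩ := h.exists_eq_concat
  obtain ⟨hne, hc, hhead, -, hnd⟩ := h
  refine ⟨by simp, List.isChain_append.2 ⟨hc, List.isChain_singleton x, ?_⟩, ?_, by simp,
    List.nodup_append.2 ⟨hnd, List.nodup_singleton x, ?_⟩⟩
  · simp_all
  · rwa [List.head?_append_of_ne_nil _ hne]
  · simp only [List.mem_singleton]
    rintro a ha _ rfl rfl
    exact hx ha

lemma exists_eq_append_of_mem (h : IsPathList E y x l) {v : V} (hv : v ∈ l) :
    ∃ s t, IsPathList E y v (s ++ [v]) ∧ IsPathList E v x (v :: t) ∧ l = s ++ v :: t := by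
  obtain ⟨s, t, rfl⟩ := List.append_of_mem hv
  have hc := h.isChain
  obtain ⟨-, -, hhead, hlast, hnd⟩ := h
  have hc' : (s ++ [v] ++ t).IsChain E := by simpa using hc
  have hnd' : (s ++ [v] ++ t).Nodup := by simpa using hnd
  refine ⟨s, t, ⟨by simp, hc'.left_of_append, ?_, by simp, hnd'.of_append_left⟩,
    ⟨List.cons_ne_nil _ _, hc.right_of_append, rfl, ?_, List.Nodup.of_append_right hnd⟩, rfl⟩
  · cases s <;> simpa using hhead
  · simpa [List.getLast?_append] using hlast

end IsPathList

section Weights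

variable {V : Type*} [Fintype V] (E : V → V → Prop) [DecidableRel E]

lemma pathWeight_cons_of_ne_nil (a : V) {l : List V} (hl : l ≠ []) :
    pathWeight E (a :: l) = (outdeg E a : ℝ)⁻¹ * pathWeight E l := by
  obtain ⟨b, t, rfl⟩ := List.exists_cons_of_ne_nil hl
  simp [pathWeight]

@[simp] lemma pathWeight_singleton (a : V) : pathWeight E [a] = 1 := rfl

lemma pathWeight_nonneg (l : List V) : 0 ≤ pathWeight E l :=
  List.prod_nonneg fun _ hx => by
    obtain ⟨p, -, rfl⟩ := List.mem_map.1 hx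
    positivity

lemma pathWeight_append (s t : List V) (a : V) :
    pathWeight E (s ++ a :: t) = pathWeight E (s ++ [a]) * pathWeight E (a :: t) := by
  induction s with
  | nil => simp
  | cons b s ih =>
    rw [List.cons_append, List.cons_append, pathWeight_cons_of_ne_nil E b (by simp),
      pathWeight_cons_of_ne_nil E b (by simp), ih, mul_assoc]

lemma sum_inv_outdeg_mul (y : V) (c : ℝ) :
    ∑ _w ∈ univ.filter (E y ·), (outdeg E y : ℝ)⁻¹ * c = if outdeg E y = 0 then 0 else c := by
  rw [sum_const, nsmul_eq_mul, ← mul_assoc]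
  change (outdeg E y : ℝ) * _ * c = _
  split_ifs with hy
  · simp [hy]
  · rw [mul_inv_cancel₀ (Nat.cast_ne_zero.2 hy), one_mul]

end Weights

@[simp] lemma mem_pathFinset {V : Type*} [Fintype V] (E : V → V → Prop) {y x : V} {l : List V} :
    l ∈ pathFinset E y x ↔ IsPathList E y x l := by
  simp only [pathFinset, mem_filter, mem_map, mem_univ, true_and, Function.Embedding.coeFn_mk]
  exact ⟨fun h => h.2, fun h => ⟨⟨⟨l, h.2.2.2.2⟩, rfl⟩, h⟩⟩

lemma pathFinset_self {V : Type*} [Fintype V] (E : V → V → Prop) (x : V) :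
    pathFinset E x x = {[x]} := by
  ext l
  rw [mem_pathFinset, mem_singleton]
  exact ⟨IsPathList.eq_singleton, fun h => h ▸ IsPathList.singleton x⟩

section Influence

variable {V : Type*} [Fintype V] (E : V → V → Prop) [DecidableRel E]

lemma infl_nonneg (x y : V) : 0 ≤ infl E x y :=
  sum_nonneg fun l _ => pathWeight_nonneg E l

lemma totInfl_nonneg (x : V) : 0 ≤ totInfl E x :=
  sum_nonneg fun y _ => infl_nonneg E x y

lemma infl_self (x : V) : infl E x x = 1 := by
  simp [infl, pathFinset_self, pathWeight]

lemma one_le_totInfl (x : V) : 1 ≤ totInfl E x :=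
  (infl_self E x).ge.trans (single_le_sum (fun y _ => infl_nonneg E x y) (mem_univ x))

lemma inv_outdeg_le_infl (hE : Acyclic E) {u v : V} (e : E u v) :
    (outdeg E u : ℝ)⁻¹ ≤ infl E v u := by
  have hpath : [u, v] ∈ pathFinset E u v :=
    (mem_pathFinset E).2 ((IsPathList.singleton v).cons hE e)
  calc (outdeg E u : ℝ)⁻¹ = pathWeight E [u, v] := by simp [pathWeight]
    _ ≤ infl E v u := single_le_sum (fun l _ => pathWeight_nonneg E l) hpath

lemma infl_le_sum_inv_outdeg_mul_infl {x y : V} (hyx : y ≠ x) :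
    infl E x y ≤ ∑ w ∈ univ.filter (E y ·), (outdeg E y : ℝ)⁻¹ * infl E x w := by
  set S := (univ.filter (E y ·)).sigma fun w => pathFinset E w x
  have hsub : pathFinset E y x ⊆ S.image fun p => y :: p.2 := by
    intro l hl
    obtain ⟨w, t, e, ht, rfl⟩ := ((mem_pathFinset E).1 hl).exists_eq_cons_of_ne hyx
    exact mem_image.2 ⟨⟨w, t⟩, mem_sigma.2 ⟨by simpa using e, (mem_pathFinset E).2 ht⟩, rfl⟩
  calc infl E x y ≤ ∑ l ∈ S.image fun p => y :: p.2, pathWeight E l :=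
        sum_le_sum_of_subset_of_nonneg hsub fun l _ _ => pathWeight_nonneg E l
    _ ≤ ∑ p ∈ S, pathWeight E (y :: p.2) :=
        sum_image_le_of_nonneg fun l _ => pathWeight_nonneg E l
    _ = ∑ w ∈ univ.filter (E y ·), (outdeg E y : ℝ)⁻¹ * infl E x w := by
        rw [sum_sigma]
        refine sum_congr rfl fun w _ => ?_
        rw [infl, mul_sum]
        exact sum_congr rfl fun t ht => pathWeight_cons_of_ne_nil E y ((mem_pathFinset E).1 ht).1

lemma sum_inv_outdeg_mul_infl_le_infl (hE : Acyclic E) (v y : V) :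
    ∑ u ∈ univ.filter (E · v), (outdeg E u : ℝ)⁻¹ * infl E u y ≤ infl E v y := by
  set S := (univ.filter (E · v)).sigma fun u => pathFinset E y u
  have hinj : Set.InjOn (fun p : (_ : V) × List V => p.2 ++ [v]) S := by
    rintro ⟨u, s⟩ hs ⟨u', s'⟩ hs' heq
    obtain ⟨-, hs⟩ := mem_sigma.1 hs
    obtain ⟨-, hs'⟩ := mem_sigma.1 hs'
    obtain rfl : s = s' := List.append_cancel_right heq
    have hu := ((mem_pathFinset E).1 hs).2.2.2.1
    rw [((mem_pathFinset E).1 hs').2.2.2.1, Option.some_inj] at hu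
    simp only at hu
    rw [hu]
  have hsub : S.image (fun p => p.2 ++ [v]) ⊆ pathFinset E y v := by
    intro l hl
    obtain ⟨⟨u, s⟩, hs, rfl⟩ := mem_image.1 hl
    obtain ⟨hu, hs⟩ := mem_sigma.1 hs
    exact (mem_pathFinset E).2 (((mem_pathFinset E).1 hs).concat hE (by simpa using hu))
  calc ∑ u ∈ univ.filter (E · v), (outdeg E u : ℝ)⁻¹ * infl E u y
      = ∑ p ∈ S, pathWeight E (p.2 ++ [v]) := by
        rw [sum_sigma]
        refine sum_congr rfl fun u _ => ?_
        rw [infl, mul_sum]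
        refine sum_congr rfl fun s hs => ?_
        obtain ⟨s, rfl⟩ := ((mem_pathFinset E).1 hs).exists_eq_concat
        rw [List.append_assoc, List.singleton_append, pathWeight_append E s [v] u,
          pathWeight_cons_of_ne_nil E u (List.cons_ne_nil _ _), pathWeight_singleton, mul_one,
          mul_comm]
    _ = ∑ l ∈ S.image (fun p => p.2 ++ [v]), pathWeight E l := (sum_image hinj).symm
    _ ≤ infl E v y := sum_le_sum_of_subset_of_nonneg hsub fun l _ _ => pathWeight_nonneg E l

lemma sum_pathWeight_filter_mem_le [DecidableEq V] (v x y : V) :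
    ∑ l ∈ (pathFinset E y x).filter (v ∈ ·), pathWeight E l ≤ infl E v y * infl E x v := by
  set S := pathFinset E y v ×ˢ pathFinset E v x
  have hsub : (pathFinset E y x).filter (v ∈ ·) ⊆ S.image fun p => p.1 ++ p.2.tail := by
    intro l hl
    obtain ⟨hl, hv⟩ := mem_filter.1 hl
    obtain ⟨s, t, hs, ht, rfl⟩ := ((mem_pathFinset E).1 hl).exists_eq_append_of_mem hv
    exact mem_image.2 ⟨⟨s ++ [v], v :: t⟩, mem_product.2 ⟨(mem_pathFinset E).2 hs,
      (mem_pathFinset E).2 ht⟩, by simp⟩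
  calc ∑ l ∈ (pathFinset E y x).filter (v ∈ ·), pathWeight E l
      ≤ ∑ l ∈ S.image fun p => p.1 ++ p.2.tail, pathWeight E l :=
        sum_le_sum_of_subset_of_nonneg hsub fun l _ _ => pathWeight_nonneg E l
    _ ≤ ∑ p ∈ S, pathWeight E (p.1 ++ p.2.tail) :=
        sum_image_le_of_nonneg fun l _ => pathWeight_nonneg E l
    _ = ∑ p ∈ S, pathWeight E p.1 * pathWeight E p.2 := by
        refine sum_congr rfl fun ⟨p, q⟩ hpq => ?_
        obtain ⟨hp, hq⟩ := mem_product.1 hpq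
        obtain ⟨s, rfl⟩ := ((mem_pathFinset E).1 hp).exists_eq_concat
        obtain ⟨t, rfl⟩ := ((mem_pathFinset E).1 hq).exists_eq_cons
        rw [List.tail_cons, List.append_assoc, List.singleton_append, pathWeight_append]
    _ = infl E v y * infl E x v := by rw [sum_product, infl, infl, sum_mul_sum]

end Influence

lemma Acyclic.wellFounded {V : Type*} [Finite V] {E : V → V → Prop} (hE : Acyclic E) :
    WellFounded (flip (Relation.TransGen E)) := by
  have : IsTrans V (flip (Relation.TransGen E)) := ⟨fun _ _ _ hab hbc => hbc.trans hab⟩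
  have : Std.Irrefl (flip (Relation.TransGen E)) := ⟨hE⟩
  exact Finite.wellFounded_of_trans_of_irrefl _

section Sinks

variable {V : Type*} [Fintype V] {E : V → V → Prop} [DecidableRel E]

@[simp] lemma mem_sinks {r : V} : r ∈ sinks E ↔ outdeg E r = 0 := by
  simp [sinks]

lemma Acyclic.le_one_of_le_mean (hE : Acyclic E) {f : V → ℝ}
    (hsink : ∀ y, outdeg E y = 0 → f y ≤ 1)
    (hmean : ∀ y, outdeg E y ≠ 0 → f y ≤ ∑ w ∈ univ.filter (E y ·), (outdeg E y : ℝ)⁻¹ * f w)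
    (y : V) : f y ≤ 1 := by
  induction y using hE.wellFounded.induction with
  | _ y ih =>
    by_cases hy : outdeg E y = 0
    · exact hsink y hy
    calc f y ≤ ∑ w ∈ univ.filter (E y ·), (outdeg E y : ℝ)⁻¹ * f w := hmean y hy
      _ ≤ ∑ w ∈ univ.filter (E y ·), (outdeg E y : ℝ)⁻¹ * 1 := by
          gcongr with w hw
          exact ih w (.single (mem_filter.1 hw).2)
      _ = 1 := by rw [sum_inv_outdeg_mul, if_neg hy]

lemma sum_sinks_infl_le_one (hE : Acyclic E) (y : V) : ∑ r ∈ sinks E, infl E r y ≤ 1 := by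
  refine hE.le_one_of_le_mean (f := fun y => ∑ r ∈ sinks E, infl E r y)
    (fun y hy => ?_) (fun y hy => ?_) y
  · have hzero : ∀ r ∈ sinks E, r ≠ y → infl E r y = 0 := fun r _ hry =>
      le_antisymm ((infl_le_sum_inv_outdeg_mul_infl E hry.symm).trans_eq
        (by rw [Finset.card_eq_zero.1 hy, sum_empty])) (infl_nonneg E r y)
    rw [sum_eq_single_of_mem y (mem_sinks.2 hy) hzero, infl_self]
  · calc ∑ r ∈ sinks E, infl E r y
        ≤ ∑ r ∈ sinks E, ∑ w ∈ univ.filter (E y ·), (outdeg E y : ℝ)⁻¹ * infl E r w :=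
          sum_le_sum fun r hr =>
            infl_le_sum_inv_outdeg_mul_infl E fun hyr => hy (hyr ▸ mem_sinks.1 hr)
      _ = ∑ w ∈ univ.filter (E y ·), (outdeg E y : ℝ)⁻¹ * ∑ r ∈ sinks E, infl E r w := by
          rw [sum_comm]
          simp_rw [mul_sum]

lemma totInfl_le_card (hE : Acyclic E) {r : V} (hr : r ∈ sinks E) :
    totInfl E r ≤ Fintype.card V :=
  calc totInfl E r ≤ ∑ _y : V, (1 : ℝ) := sum_le_sum fun y _ =>
        (single_le_sum (fun r _ => infl_nonneg E r y) hr).trans (sum_sinks_infl_le_one hE y)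
    _ = Fintype.card V := by simp

end Sinks

lemma isChain_remOut_iff {V : Type*} (E : V → V → Prop) (v : V) {l : List V} :
    l.IsChain (remOut E v) ↔ l.IsChain E ∧ v ∉ l.dropLast := by
  induction l with
  | nil => simp
  | cons a t ih =>
    cases t with
    | nil => simp
    | cons b t =>
      simp only [List.isChain_cons_cons, ih, List.dropLast_cons_cons, List.mem_cons, remOut]
      tauto

lemma isPathList_remOut_iff {V : Type*} (E : V → V → Prop) (v : V) {x y : V} {l : List V} :
    IsPathList (remOut E v) y x l ↔ IsPathList E y x l ∧ v ∉ l.dropLast := by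
  have hc := isChain_remOut_iff E v (l := l)
  exact ⟨fun h => ⟨⟨h.1, (hc.1 h.2.1).1, h.2.2⟩, (hc.1 h.2.1).2⟩,
    fun h => ⟨h.1.1, hc.2 ⟨h.1.2.1, h.2⟩, h.1.2.2⟩⟩

lemma sq_div_sub_sq_div_le {a b n : ℝ} (hn : 0 < n) (hba : b ≤ a) (han : a ≤ n) :
    (a / n) ^ 2 - (b / n) ^ 2 ≤ 2 * (a - b) / n := by
  rw [div_pow, div_pow, ← sub_div, div_le_div_iff₀ (by positivity) hn]
  nlinarith [mul_nonneg (sub_nonneg.2 hba) (sub_nonneg.2 han), mul_nonneg (sub_nonneg.2 hba) hn.le]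

section RemOut

variable {V : Type*} [Fintype V] [DecidableEq V] (E : V → V → Prop) [DecidableRel E] (v : V)

lemma outdeg_remOut_of_ne {x : V} (hx : x ≠ v) : outdeg (remOut E v) x = outdeg E x := by
  simp [outdeg, remOut, hx]

lemma sinks_subset_sinks_remOut : sinks E ⊆ sinks (remOut E v) := fun _ hr =>
  mem_sinks.2 <| Nat.eq_zero_of_le_zero <| (mem_sinks.1 hr) ▸
    card_le_card (monotone_filter_right _ fun _ _ h => h.1)

lemma pathWeight_remOut {l : List V} (hl : l.IsChain (remOut E v)) :
    pathWeight (remOut E v) l = pathWeight E l := by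
  induction l with
  | nil => rfl
  | cons a t ih =>
    cases t with
    | nil => rfl
    | cons b t =>
      rw [List.isChain_cons_cons] at hl
      rw [pathWeight_cons_of_ne_nil _ a (List.cons_ne_nil _ _),
        pathWeight_cons_of_ne_nil _ a (List.cons_ne_nil _ _), ih hl.2,
        outdeg_remOut_of_ne E v hl.1.2]

lemma infl_remOut (x y : V) :
    infl (remOut E v) x y =
      ∑ l ∈ (pathFinset E y x).filter (v ∉ ·.dropLast), pathWeight E l := by
  have hpaths : pathFinset (remOut E v) y x = (pathFinset E y x).filter (v ∉ ·.dropLast) := by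
    ext l
    simp only [mem_filter, mem_pathFinset, isPathList_remOut_iff]
  rw [infl, hpaths]
  refine sum_congr rfl fun l hl => pathWeight_remOut E v ?_
  rw [← hpaths, mem_pathFinset] at hl
  exact hl.isChain

lemma totInfl_remOut_le (x : V) : totInfl (remOut E v) x ≤ totInfl E x :=
  sum_le_sum fun y _ => (infl_remOut E v x y).trans_le
    (sum_le_sum_of_subset_of_nonneg (filter_subset _ _) fun l _ _ => pathWeight_nonneg E l)

lemma infl_sub_infl_remOut_le (x y : V) :
    infl E x y - infl (remOut E v) x y ≤ infl E v y * infl E x v := by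
  rw [infl_remOut, infl, ← sum_filter_add_sum_filter_not _ (v ∈ ·.dropLast), add_sub_cancel_right]
  refine le_trans ?_ (sum_pathWeight_filter_mem_le E v x y)
  exact sum_le_sum_of_subset_of_nonneg
    (monotone_filter_right _ fun _ _ h => List.mem_of_mem_dropLast h)
    fun l _ _ => pathWeight_nonneg E l

lemma totInfl_sub_totInfl_remOut_le (x : V) :
    totInfl E x - totInfl (remOut E v) x ≤ totInfl E v * infl E x v := by
  rw [totInfl, totInfl, ← sum_sub_distrib, totInfl, sum_mul]
  exact sum_le_sum fun y _ => infl_sub_infl_remOut_le E v x y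

lemma Zval_le_Zval_remOut_add (hE : Acyclic E) :
    Zval E ≤ Zval (remOut E v) + 2 * totInfl E v / (Fintype.card V : ℝ) := by
  set n := (Fintype.card V : ℝ)
  have hn : 0 < n := Nat.cast_pos.2 (Fintype.card_pos_iff.2 ⟨v⟩)
  calc Zval E = ∑ r ∈ sinks E, (totInfl (remOut E v) r / n) ^ 2
        + ∑ r ∈ sinks E, ((totInfl E r / n) ^ 2 - (totInfl (remOut E v) r / n) ^ 2) := by
        rw [Zval, ← sum_add_distrib]
        simp [n]
    _ ≤ Zval (remOut E v) + ∑ r ∈ sinks E, 2 * (totInfl E v * infl E r v) / n := by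
        gcongr with r hr
        · exact sum_le_sum_of_subset_of_nonneg (sinks_subset_sinks_remOut E v)
            fun _ _ _ => sq_nonneg _
        · refine (sq_div_sub_sq_div_le hn (totInfl_remOut_le E v r)
            (totInfl_le_card hE hr)).trans ?_
          gcongr
          exact totInfl_sub_totInfl_remOut_le E v r
    _ = Zval (remOut E v) + 2 * totInfl E v / n * ∑ r ∈ sinks E, infl E r v := by
        rw [mul_sum]
        congr 1
        exact sum_congr rfl fun r _ => by ring
    _ ≤ Zval (remOut E v) + 2 * totInfl E v / n := by
        gcongr
        exact mul_le_of_le_one_right (by have := totInfl_nonneg E v; positivity)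
          (sum_sinks_infl_le_one hE v)

end RemOut

section EdgeZ

variable {V : Type*} [Fintype V] (E : V → V → Prop) [DecidableRel E]

noncomputable def Zedge (v : V) : ℝ :=
  (totInfl E v / (Fintype.card V : ℝ)) ^ 2 -
    ∑ u ∈ univ.filter (E · v), (outdeg E u : ℝ)⁻¹ * (totInfl E u / (Fintype.card V : ℝ)) ^ 2

lemma Zfun_le_Zedge (hE : Acyclic E) (v : V) : Zfun E v ≤ Zedge E v :=
  sub_le_sub_left (sum_le_sum fun _ hu =>
    mul_le_mul_of_nonneg_right (inv_outdeg_le_infl E hE (mem_filter.1 hu).2) (sq_nonneg _)) _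

lemma sum_inv_outdeg_mul_totInfl_le (hE : Acyclic E) (v : V) :
    ∑ u ∈ univ.filter (E · v), (outdeg E u : ℝ)⁻¹ * totInfl E u ≤ totInfl E v := by
  simp_rw [totInfl, mul_sum]
  rw [sum_comm]
  exact sum_le_sum fun y _ => sum_inv_outdeg_mul_infl_le_infl E hE v y

lemma Zedge_nonneg (hE : Acyclic E) (hmono : MonotoneDigraph E) (v : V) : 0 ≤ Zedge E v := by
  set n := (Fintype.card V : ℝ)
  rw [Zedge, sub_nonneg]
  calc ∑ u ∈ univ.filter (E · v), (outdeg E u : ℝ)⁻¹ * (totInfl E u / n) ^ 2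
      ≤ ∑ u ∈ univ.filter (E · v), (outdeg E u : ℝ)⁻¹ * totInfl E u * (totInfl E v / n ^ 2) :=
        sum_le_sum fun u hu => by
          rw [div_pow, sq (totInfl E u), mul_div_assoc, ← mul_assoc]
          exact mul_le_mul_of_nonneg_left
            (div_le_div_of_nonneg_right (hmono u v (mem_filter.1 hu).2).le (sq_nonneg n))
            (mul_nonneg (inv_nonneg.2 (Nat.cast_nonneg _)) (totInfl_nonneg E u))
    _ = (∑ u ∈ univ.filter (E · v), (outdeg E u : ℝ)⁻¹ * totInfl E u) * (totInfl E v / n ^ 2) :=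
        (sum_mul ..).symm
    _ ≤ totInfl E v * (totInfl E v / n ^ 2) :=
        mul_le_mul_of_nonneg_right (sum_inv_outdeg_mul_totInfl_le E hE v)
          (div_nonneg (totInfl_nonneg E v) (sq_nonneg n))
    _ = (totInfl E v / n) ^ 2 := by ring

/-- Each non-sink `u` enters `∑ v, Zedge E v` once positively and `outdeg u` times with
weight `1/outdeg u` negatively, so only the sinks survive. -/
lemma sum_Zedge : ∑ v, Zedge E v = Zval E := by
  set c := fun u => (totInfl E u / (Fintype.card V : ℝ)) ^ 2
  calc ∑ v, Zedge E v
      = ∑ v, c v - ∑ v, ∑ u ∈ univ.filter (E · v), (outdeg E u : ℝ)⁻¹ * c u :=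
        sum_sub_distrib ..
    _ = ∑ v, c v - ∑ u, ∑ _v ∈ univ.filter (E u ·), (outdeg E u : ℝ)⁻¹ * c u := by
        simp only [sum_filter]
        rw [sum_comm]
    _ = ∑ v, c v - ∑ u, if outdeg E u = 0 then 0 else c u := by
        simp_rw [sum_inv_outdeg_mul]
    _ = Zval E := by
        rw [← sum_sub_distrib, Zval, sinks, sum_filter]
        exact sum_congr rfl fun u _ => by split_ifs <;> simp [c]

lemma Zval_pos [Nonempty V] (hmono : MonotoneDigraph E) : 0 < Zval E := by
  obtain ⟨r, -, hr⟩ := exists_max_image univ (totInfl E) univ_nonempty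
  have hsink : r ∈ sinks E := by
    rw [mem_sinks, outdeg, Finset.card_eq_zero, filter_eq_empty_iff]
    exact fun w _ e => (hr w (mem_univ w)).not_gt (hmono r w e)
  have hpos : 0 < totInfl E r / (Fintype.card V : ℝ) :=
    div_pos ((zero_lt_one).trans_le (one_le_totInfl E r)) (Nat.cast_pos.2 Fintype.card_pos)
  exact (pow_pos hpos 2).trans_le
    (single_le_sum (f := fun r => (totInfl E r / (Fintype.card V : ℝ)) ^ 2)
      (fun r _ => sq_nonneg _) hsink)

end EdgeZ

lemma Zfun_div_le_Zedge_div {V : Type*} [Fintype V] [DecidableEq V] (E : V → V → Prop)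
    [DecidableRel E] (hE : Acyclic E) (hmono : MonotoneDigraph E) (v : V) :
    Zfun E v / (Zval (remOut E v) + 2 * totInfl E v / (Fintype.card V : ℝ)) ≤
      Zedge E v / Zval E := by
  have : Nonempty V := ⟨v⟩
  have hZ := Zval_pos E hmono
  have hD := Zval_le_Zval_remOut_add E v hE
  calc Zfun E v / (Zval (remOut E v) + 2 * totInfl E v / (Fintype.card V : ℝ))
      ≤ Zedge E v / (Zval (remOut E v) + 2 * totInfl E v / (Fintype.card V : ℝ)) :=
        div_le_div_of_nonneg_right (Zfun_le_Zedge E hE v) (hZ.trans_le hD).le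
    _ ≤ Zedge E v / Zval E := div_le_div_of_nonneg_left (Zedge_nonneg E hE hmono v) hZ hD

/-- In a monotone finite DAG, the analytic Two Path mechanism
`Pr(v) = Z(v) / (Z_v + 2 I(v)/n)` defines a (sub)probability distribution:
the probabilities sum to at most one. -/
theorem analytic_two_path_subprobability {V : Type*} [Fintype V] [DecidableEq V]
    (E : V → V → Prop) [DecidableRel E] (hacyc : Acyclic E)
    (hmono : MonotoneDigraph E) :
    ∑ v : V, Zfun E v /
        (Zval (remOut E v) + 2 * totInfl E v / (Fintype.card V : ℝ)) ≤ 1 :=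
  calc _ ≤ ∑ v : V, Zedge E v / Zval E :=
        sum_le_sum fun v _ => Zfun_div_le_Zedge_div E hacyc hmono v
    _ = Zval E / Zval E := by rw [← sum_div, sum_Zedge]
    _ ≤ 1 := div_self_le_one _
end
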